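/- arXiv:1111.1814 — 2 statements merged into one kernel-verified Lean document; each statement's English description precedes it below -/
import Mathlib

section
/- Let G be a finite simple connected graph with a nonempty terminal set R ⊆ V(G), and let G' be the graph obtained from G by adding two new nonadjacent vertices s and t, each made adjacent to every vertex of R. Then there exists a set T ⊆ V(G) \ R with |T| ≤ r such that the subgraph of G induced on R ∪ T is connected if and only if G' has a connected (s,t)-vertex separator of size at most |R| + r. -/
open SimpleGraph

/-- A walk avoids a set `S` if none of its vertices lies in `S`. -/
def WalkAvoids {V : Type*} {G : SimpleGraph V} {u v : V} (p : G.Walk u v) (S : Set V) : Prop :=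
  ∀ w ∈ p.support, w ∉ S

/-- `S` is an `(s,t)`-vertex separator: `s, t ∉ S` and every walk from `s` to `t` meets `S`. -/
def IsSep {V : Type*} (G : SimpleGraph V) (s t : V) (S : Set V) : Prop :=
  s ∉ S ∧ t ∉ S ∧ ∀ p : G.Walk s t, ∃ w ∈ p.support, w ∈ S

/-- A connected `(s,t)`-vertex separator. -/
def IsConnSep {V : Type*} (G : SimpleGraph V) (s t : V) (S : Set V) : Prop :=
  IsSep G s t S ∧ (G.induce S).Connected

/-- A minimal `(s,t)`-vertex separator: no proper subset is a separator. -/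
def IsMinimalSep {V : Type*} (G : SimpleGraph V) (s t : V) (S : Set V) : Prop :=
  IsSep G s t S ∧ ∀ S' ⊂ S, ¬ IsSep G s t S'

/-- The connected component of `s` in `G − S`, as the set of vertices reachable
from `s` by walks avoiding `S`. -/
def CompOf {V : Type*} (G : SimpleGraph V) (S : Set V) (s : V) : Set V :=
  {v | ∃ p : G.Walk s v, WalkAvoids p S}

/-- `G` has chordality at most `c`: it contains no induced cycle of length at least `c+1`. -/
def ChordalityAtMost {V : Type*} (G : SimpleGraph V) (c : ℕ) : Prop :=
  ∀ n, c + 1 ≤ n → IsEmpty (cycleGraph n ↪g G)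

/-- The graph `G'` obtained from `G` by adding two new nonadjacent vertices
`s = Sum.inr false` and `t = Sum.inr true`, each made adjacent to every vertex of `R`. -/
def TermExt {V : Type*} (G : SimpleGraph V) (R : Set V) : SimpleGraph (V ⊕ Bool) :=
  SimpleGraph.fromRel (fun a b =>
    match a, b with
    | Sum.inl u, Sum.inl v => G.Adj u v
    | Sum.inl y, Sum.inr _ => y ∈ R
    | _, _ => False)

open Set

section TermExt

variable {V : Type*} (G : SimpleGraph V) (R : Set V)

@[simp]
lemma termExt_adj_inl_inl (u v : V) :
    (TermExt G R).Adj (Sum.inl u) (Sum.inl v) ↔ G.Adj u v := by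
  simp only [TermExt, fromRel_adj, ne_eq, Sum.inl.injEq]
  exact ⟨fun ⟨_, h⟩ => h.elim id G.adj_symm, fun h => ⟨h.ne, Or.inl h⟩⟩

@[simp]
lemma termExt_adj_inr_inl (b : Bool) (y : V) :
    (TermExt G R).Adj (Sum.inr b) (Sum.inl y) ↔ y ∈ R := by
  simp [TermExt]

@[simp]
lemma termExt_adj_inl_inr (y : V) (b : Bool) :
    (TermExt G R).Adj (Sum.inl y) (Sum.inr b) ↔ y ∈ R := by
  rw [adj_comm, termExt_adj_inr_inl]

@[simp]
lemma termExt_not_adj_inr_inr (a b : Bool) : ¬ (TermExt G R).Adj (Sum.inr a) (Sum.inr b) := by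
  simp [TermExt]

lemma connected_induce_termExt_image_inl_iff (A : Set V) :
    ((TermExt G R).induce (Sum.inl '' A)).Connected ↔ (G.induce A).Connected :=
  (Iso.connected_iff
    { toEquiv := Equiv.Set.image Sum.inl A Sum.inl_injective
      map_rel_iff' := termExt_adj_inl_inl G R _ _ }).symm

/-- Every `(s,t)`-walk in `TermExt G R` starts with an edge from `s` into `R`. -/
lemma isSep_termExt_iff (S : Set (V ⊕ Bool)) :
    IsSep (TermExt G R) (Sum.inr false) (Sum.inr true) S ↔
      Sum.inr false ∉ S ∧ Sum.inr true ∉ S ∧ Sum.inl '' R ⊆ S := by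
  refine and_congr_right fun hs => and_congr_right fun ht => ⟨?_, ?_⟩
  · rintro hsep _ ⟨y, hy, rfl⟩
    have hs' := (termExt_adj_inr_inl G R false y).2 hy
    have ht' := (termExt_adj_inl_inr G R y true).2 hy
    obtain ⟨w, hw, hwS⟩ := hsep (.cons hs' (.cons ht' .nil))
    simp only [Walk.support_cons, Walk.support_nil, List.mem_cons, List.not_mem_nil,
      or_false] at hw
    rcases hw with rfl | rfl | rfl
    exacts [(hs hwS).elim, hwS, (ht hwS).elim]
  · rintro hRS (_ | @⟨_, w, _, h, _⟩)
    cases w with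
    | inl y => exact ⟨.inl y, by simp, hRS ⟨y, (termExt_adj_inr_inl G R _ y).1 h, rfl⟩⟩
    | inr b => exact (termExt_not_adj_inr_inr G R _ b h).elim

lemma isConnSep_termExt_iff (S : Set (V ⊕ Bool)) :
    IsConnSep (TermExt G R) (Sum.inr false) (Sum.inr true) S ↔
      ∃ A, R ⊆ A ∧ (G.induce A).Connected ∧ Sum.inl '' A = S := by
  rw [IsConnSep, isSep_termExt_iff]
  constructor
  · rintro ⟨⟨hs, ht, hRS⟩, hconn⟩
    have hS : Sum.inl '' (Sum.inl ⁻¹' S) = S := by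
      refine image_preimage_eq_of_subset fun x hx => ?_
      rcases x with y | (_ | _)
      exacts [⟨y, rfl⟩, (hs hx).elim, (ht hx).elim]
    refine ⟨Sum.inl ⁻¹' S, fun y hy => hRS ⟨y, hy, rfl⟩, ?_, hS⟩
    rwa [← connected_induce_termExt_image_inl_iff G R, hS]
  · rintro ⟨A, hRA, hconn, rfl⟩
    exact ⟨⟨by simp, by simp, image_mono hRA⟩,
      (connected_induce_termExt_image_inl_iff G R A).2 hconn⟩

end TermExt

theorem stmt6_general {V : Type*} [Fintype V] (G : SimpleGraph V)
    (R : Set V) (r : ℕ) :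
    (∃ T : Set V, T ⊆ Rᶜ ∧ T.ncard ≤ r ∧ (G.induce (R ∪ T)).Connected) ↔
    (∃ S : Set (V ⊕ Bool),
      IsConnSep (TermExt G R) (Sum.inr false) (Sum.inr true) S ∧
      S.ncard ≤ R.ncard + r) := by
  simp_rw [isConnSep_termExt_iff]
  constructor
  · rintro ⟨T, -, hT, hconn⟩
    refine ⟨_, ⟨R ∪ T, subset_union_left, hconn, rfl⟩, ?_⟩
    rw [ncard_image_of_injective _ Sum.inl_injective]
    exact (ncard_union_le R T).trans (by omega)
  · rintro ⟨_, ⟨A, hRA, hconn, rfl⟩, hcard⟩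
    refine ⟨A \ R, fun _ hx => hx.2, ?_, by rwa [union_sdiff_cancel hRA]⟩
    rw [ncard_image_of_injective _ Sum.inl_injective] at hcard
    have := ncard_sdiff_add_ncard_of_subset hRA
    omega

theorem stmt6 {V : Type*} [Fintype V] (G : SimpleGraph V) (hG : G.Connected)
    (R : Set V) (hR : R.Nonempty) (r : ℕ) :
    (∃ T : Set V, T ⊆ Rᶜ ∧ T.ncard ≤ r ∧ (G.induce (R ∪ T)).Connected) ↔
    (∃ S : Set (V ⊕ Bool),
      IsConnSep (TermExt G R) (Sum.inr false) (Sum.inr true) S ∧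
      S.ncard ≤ R.ncard + r) :=
  stmt6_general G R r
end

section
/- Let G be a finite simple chordal bipartite graph, let s, t be nonadjacent distinct vertices of G, and let S be a minimal (s,t)-vertex separator such that the subgraph of G induced on S is an independent set. Let C_s and C_t be the connected components of G − S containing s and t respectively. Then there exists a vertex u in C_s with S ⊆ N_G(u) and there exists a vertex v in C_t with S ⊆ N_G(v). -/
open SimpleGraph

/-!
For distinct `x, y ∈ S`, shortest `x`–`y` paths through `C_s` and through `C_t` glue to an
induced cycle, because `S` is independent and no edge joins `C_s` to `C_t`. As `G` is bipartite
and has no induced cycle of length at least 6, both paths have length 2: any two vertices of `S`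
have a common neighbour in `C_s` and one in `C_t`.

In a triangle-free graph without induced hexagons, neighbourhoods have a Helly property: if `u`
sees `T \ {x}`, `w` sees `T \ {z}` and `v` sees `T \ {y}`, but `u` misses `x` and `w` misses `z`,
then `y w x v z u` is a hexagon whose only possible long chord is `vy`. Induction on `|T|` turns
the common neighbours of pairs into a common neighbour of all of `S`.
-/

namespace SimpleGraph

variable {V W : Type*} {G : SimpleGraph V}

lemma not_adj_of_adj_of_adj (hG : G.CliqueFree 3) {a b c : V} (hab : G.Adj a b)
    (hbc : G.Adj b c) : ¬ G.Adj a c := by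
  classical
  exact fun hac => hG {a, b, c} (is3Clique_triple_iff.2 ⟨hab, hac, hbc⟩)

lemma cycleGraph_adj_iff_of_lt {n : ℕ} {a b : Fin n} (hab : a < b) :
    (cycleGraph n).Adj a b ↔ b.val = a.val + 1 ∨ (a.val = 0 ∧ b.val = n - 1) := by
  have hab' : a.val < b.val := hab
  have hb := b.isLt
  rw [cycleGraph_adj', Fin.sub_val_of_le hab.le, Fin.val_sub, Nat.mod_eq_of_lt (by omega)]
  omega

lemma Colorable.even_of_embedding_cycleGraph {n : ℕ} (hG : G.Colorable 2)
    (e : cycleGraph n ↪g G) (hn : 2 ≤ n) : Even n := by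
  by_contra hodd
  have h2 := (hG.of_hom e.toHom).chromaticNumber_le
  rw [chromaticNumber_cycleGraph_of_odd n hn (Nat.not_even_iff_odd.1 hodd)] at h2
  norm_num at h2

def IsInducedPath (G : SimpleGraph V) (f : ℕ → V) (n : ℕ) : Prop :=
  ∀ i j, i < j → j ≤ n → f i ≠ f j ∧ (G.Adj (f i) (f j) ↔ j = i + 1)

def IsInducedCycle (G : SimpleGraph V) (f : ℕ → V) (n : ℕ) : Prop :=
  ∀ i j, i < j → j < n →
    f i ≠ f j ∧ (G.Adj (f i) (f j) ↔ j = i + 1 ∨ (i = 0 ∧ j = n - 1))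

lemma IsInducedPath.map {H : SimpleGraph W} {f : ℕ → V} {n : ℕ} (hf : G.IsInducedPath f n)
    (e : G ↪g H) : H.IsInducedPath (e ∘ f) n := fun i j hij hj =>
  ⟨e.injective.ne (hf i j hij hj).1, e.map_adj_iff.trans (hf i j hij hj).2⟩

lemma Walk.dist_getVert_getVert {u v : V} (p : G.Walk u v) (hp : p.length = G.dist u v)
    {i j : ℕ} (hij : i ≤ j) (hj : j ≤ p.length) :
    G.dist (p.getVert i) (p.getVert j) = j - i := by
  have h := length_eq_dist_of_subwalk hp ((isSubwalk_take (p.drop i) (j - i)).trans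
    (isSubwalk_drop p i))
  have hend : (p.drop i).getVert (j - i) = p.getVert j := by
    rw [drop_getVert, Nat.add_sub_cancel' hij]
  calc G.dist (p.getVert i) (p.getVert j)
      = G.dist (p.getVert i) ((p.drop i).getVert (j - i)) := by rw [hend]
    _ = j - i := by rw [← h, take_length, drop_length]; omega

lemma Walk.isInducedPath_getVert {u v : V} (p : G.Walk u v) (hp : p.length = G.dist u v) :
    G.IsInducedPath p.getVert p.length := by
  intro i j hij hj
  have hd := p.dist_getVert_getVert hp hij.le hj
  refine ⟨fun heq => ?_, ?_⟩
  · rw [heq, dist_self] at hd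
    omega
  · rw [← dist_eq_one_iff_adj, hd]
    omega

lemma IsInducedCycle.nonempty_embedding {f : ℕ → V} {n : ℕ} (hf : G.IsInducedCycle f n) :
    Nonempty (cycleGraph n ↪g G) := by
  have adj_iff {a b : Fin n} (hab : a < b) : G.Adj (f a) (f b) ↔ (cycleGraph n).Adj a b := by
    rw [cycleGraph_adj_iff_of_lt hab]
    exact (hf a b hab b.isLt).2
  refine ⟨⟨⟨fun i => f i, fun a b hab => ?_⟩, fun {a b} => ?_⟩⟩
  · by_contra hne
    rcases lt_or_gt_of_ne hne with h | h
    · exact (hf a b h b.isLt).1 hab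
    · exact (hf b a h a.isLt).1 hab.symm
  · rcases lt_trichotomy a b with h | rfl | h
    · exact adj_iff h
    · simp
    · rw [G.adj_comm, (cycleGraph n).adj_comm]
      exact adj_iff h

lemma IsInducedPath.glue {f g : ℕ → V} {p q : ℕ} (hf : G.IsInducedPath f p)
    (hg : G.IsInducedPath g q) (hp : 2 ≤ p) (hq : 2 ≤ q) (h0 : f 0 = g 0) (hpq : f p = g q)
    (hinterior : ∀ i, 0 < i → i < p → ∀ k, 0 < k → k < q →
      f i ≠ g k ∧ ¬ G.Adj (f i) (g k)) :
    G.IsInducedCycle (fun m => if m ≤ p then f m else g (p + q - m)) (p + q) := by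
  intro i j hij hj
  by_cases hjp : j ≤ p
  · simp only [if_pos hjp, if_pos (hij.le.trans hjp)]
    rw [hf i j hij hjp |>.2]
    exact ⟨(hf i j hij hjp).1, by omega⟩
  by_cases hip : i ≤ p
  · simp only [if_neg hjp, if_pos hip]
    obtain hi | hi | hi := (by omega : i = 0 ∨ i = p ∨ (0 < i ∧ i < p))
    · subst hi
      rw [h0, hg 0 (p + q - j) (by omega) (by omega) |>.2]
      exact ⟨(hg 0 (p + q - j) (by omega) (by omega)).1, by omega⟩
    · rw [hi, hpq, G.adj_comm, hg (p + q - j) q (by omega) le_rfl |>.2]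
      exact ⟨(hg (p + q - j) q (by omega) le_rfl).1.symm, by omega⟩
    · obtain ⟨hne, hnadj⟩ := hinterior i hi.1 hi.2 (p + q - j) (by omega) (by omega)
      exact ⟨hne, by simp only [hnadj, false_iff]; omega⟩
  · simp only [if_neg hjp, if_neg hip]
    rw [G.adj_comm, hg (p + q - j) (p + q - i) (by omega) (by omega) |>.2]
    exact ⟨(hg (p + q - j) (p + q - i) (by omega) (by omega)).1.symm, by omega⟩

lemma adj_of_hexagon (hch : ChordalityAtMost G 5) (hG : G.CliqueFree 3) {a b c d e f : V}
    (hab : G.Adj a b) (hbc : G.Adj b c) (hcd : G.Adj c d) (hde : G.Adj d e) (hef : G.Adj e f)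
    (hfa : G.Adj f a) (hbe : ¬ G.Adj b e) (hcf : ¬ G.Adj c f) : G.Adj a d := by
  by_contra had
  have hac := not_adj_of_adj_of_adj hG hab hbc
  have hbd := not_adj_of_adj_of_adj hG hbc hcd
  have hce := not_adj_of_adj_of_adj hG hcd hde
  have hdf := not_adj_of_adj_of_adj hG hde hef
  have hea := not_adj_of_adj_of_adj hG hef hfa
  have hfb := not_adj_of_adj_of_adj hG hfa hab
  let v : Fin 6 → V := ![a, b, c, d, e, f]
  have hv : ∀ i j, G.Adj (v i) (v j) ↔ (cycleGraph 6).Adj i j := by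
    intro i j
    fin_cases i <;> fin_cases j <;> dsimp [v] <;>
      first
        | exact iff_of_true ‹_› (by decide)
        | exact iff_of_true (Adj.symm ‹_›) (by decide)
        | exact iff_of_false ‹_› (by decide)
        | exact iff_of_false (fun h => absurd h.symm ‹_›) (by decide)
        | exact iff_of_false G.irrefl (by decide)
  have hinj : Function.Injective v := by
    intro i j hij
    have hnbr : ∀ k, (cycleGraph 6).Adj i k ↔ (cycleGraph 6).Adj j k := fun k => by
      rw [← hv, ← hv, hij]
    -- distinct vertices of `C₆` have distinct neighbourhoods
    have hC6 : ∀ a b : Fin 6,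
        (∀ k, (cycleGraph 6).Adj a k ↔ (cycleGraph 6).Adj b k) → a = b := by
      decide
    exact hC6 i j hnbr
  exact (hch 6 le_rfl).false ⟨⟨v, hinj⟩, hv _ _⟩

open Finset in
theorem exists_forall_adj_of_forall_pair (hch : ChordalityAtMost G 5) (hG : G.CliqueFree 3)
    {C : Set V} (hC : C.Nonempty) (T : Finset V)
    (hT : ∀ a ∈ T, ∀ b ∈ T, ∃ u ∈ C, G.Adj u a ∧ G.Adj u b) :
    ∃ u ∈ C, ∀ a ∈ T, G.Adj u a := by
  classical
  induction T using Finset.strongInduction with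
  | H T ih =>
  by_cases h3 : 2 < #T
  · obtain ⟨x, y, z, hx, hy, hz, hxy, hxz, hyz⟩ := two_lt_card_iff.1 h3
    have hsub (c : V) (hc : c ∈ T) : ∃ u ∈ C, ∀ a ∈ T.erase c, G.Adj u a :=
      ih _ (erase_ssubset hc) fun a ha b hb => hT a (mem_of_mem_erase ha) b (mem_of_mem_erase hb)
    have extend {c u : V} (hu : ∀ a ∈ T.erase c, G.Adj u a) (huc : G.Adj u c) :
        ∀ a ∈ T, G.Adj u a := fun a ha => by
      by_cases hac : a = c
      · exact hac ▸ huc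
      · exact hu a (mem_erase.2 ⟨hac, ha⟩)
    obtain ⟨u, hu, huT⟩ := hsub x hx
    obtain ⟨w, hw, hwT⟩ := hsub z hz
    obtain ⟨v, hv, hvT⟩ := hsub y hy
    by_cases hux : G.Adj u x
    · exact ⟨u, hu, extend huT hux⟩
    by_cases hwz : G.Adj w z
    · exact ⟨w, hw, extend hwT hwz⟩
    -- `y w x v z u` would otherwise be an induced hexagon.
    refine ⟨v, hv, extend hvT
      (adj_of_hexagon hch hG ?_ ?_ ?_ ?_ ?_ ?_ hwz fun h => hux h.symm).symm⟩
    · exact (hwT y (mem_erase.2 ⟨hyz, hy⟩)).symm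
    · exact hwT x (mem_erase.2 ⟨hxz, hx⟩)
    · exact (hvT x (mem_erase.2 ⟨hxy, hx⟩)).symm
    · exact hvT z (mem_erase.2 ⟨hyz.symm, hz⟩)
    · exact (huT z (mem_erase.2 ⟨hxz.symm, hz⟩)).symm
    · exact huT y (mem_erase.2 ⟨hxy.symm, hy⟩)
  · obtain h | h | h : #T = 0 ∨ #T = 1 ∨ #T = 2 := by omega
    · obtain ⟨u, hu⟩ := hC
      exact ⟨u, hu, by simp [card_eq_zero.1 h]⟩
    · obtain ⟨a, rfl⟩ := card_eq_one.1 h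
      obtain ⟨u, hu, hua, -⟩ := hT a (mem_singleton_self a) a (mem_singleton_self a)
      exact ⟨u, hu, by simpa using hua⟩
    · obtain ⟨a, b, -, rfl⟩ := card_eq_two.1 h
      obtain ⟨u, hu, hua, hub⟩ := hT a (by simp) b (by simp)
      exact ⟨u, hu, by simp [hua, hub]⟩

end SimpleGraph

section Separators

variable {V : Type*} {G : SimpleGraph V} {S : Set V} {s t u v w x y : V}

lemma mem_compOf_self (hs : s ∉ S) : s ∈ CompOf G S s :=
  ⟨Walk.nil, by simpa [WalkAvoids] using hs⟩

lemma notMem_of_mem_compOf (hv : v ∈ CompOf G S s) : v ∉ S :=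
  let ⟨p, hp⟩ := hv
  hp v p.end_mem_support

lemma compOf_subset_of_adj (h : G.Adj u v) (hu : u ∉ S) : CompOf G S v ⊆ CompOf G S u :=
  fun _ ⟨p, hp⟩ => ⟨p.cons h, by simpa [WalkAvoids] using ⟨hu, hp⟩⟩

lemma mem_compOf_of_mem_support (p : G.Walk s v) (hp : WalkAvoids p S) (hw : w ∈ p.support) :
    w ∈ CompOf G S s := by
  classical
  exact ⟨p.takeUntil w hw, fun x hx => hp x (p.support_takeUntil_subset_support hw hx)⟩

lemma SimpleGraph.Walk.exists_adj_mem_compOf (p : G.Walk u v) (hu : u ∉ S) (hv : v ∈ S) :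
    ∃ b ∈ p.support, b ∈ S ∧ ∃ a ∈ CompOf G S u, G.Adj a b := by
  induction p with
  | nil => exact absurd hv hu
  | @cons u w v h q ih =>
    by_cases hw : w ∈ S
    · exact ⟨w, by simp, hw, u, mem_compOf_self hu, h⟩
    · obtain ⟨b, hb, hbS, a, ha, hab⟩ := ih hw hv
      exact ⟨b, List.mem_cons_of_mem _ hb, hbS, a, compOf_subset_of_adj h hu ha, hab⟩

lemma IsSep.symm (h : IsSep G s t S) : IsSep G t s S := by
  refine ⟨h.2.1, h.1, fun p => ?_⟩
  obtain ⟨w, hw, hwS⟩ := h.2.2 p.reverse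
  exact ⟨w, by simpa using hw, hwS⟩

lemma IsMinimalSep.symm (h : IsMinimalSep G s t S) : IsMinimalSep G t s S :=
  ⟨h.1.symm, fun S' hS' hsep => h.2 S' hS' hsep.symm⟩

lemma IsSep.false_of_walkAvoids {a b : V} (hS : IsSep G s t S) (ha : a ∈ CompOf G S s)
    (hb : b ∈ CompOf G S t) (r : G.Walk a b) (hr : WalkAvoids r S) : False := by
  obtain ⟨p, hp⟩ := ha
  obtain ⟨q, hq⟩ := hb
  obtain ⟨w, hw, hwS⟩ := hS.2.2 (p.append (r.append q.reverse))
  simp only [Walk.mem_support_append_iff, Walk.support_reverse, List.mem_reverse] at hw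
  rcases hw with hw | hw | hw
  exacts [hp w hw hwS, hr w hw hwS, hq w hw hwS]

lemma IsSep.ne_of_mem_compOf {a b : V} (hS : IsSep G s t S) (ha : a ∈ CompOf G S s)
    (hb : b ∈ CompOf G S t) : a ≠ b := by
  rintro rfl
  exact hS.false_of_walkAvoids ha hb .nil (by simpa [WalkAvoids] using notMem_of_mem_compOf ha)

lemma IsSep.not_adj_of_mem_compOf {a b : V} (hS : IsSep G s t S) (ha : a ∈ CompOf G S s)
    (hb : b ∈ CompOf G S t) : ¬ G.Adj a b := fun h =>
  hS.false_of_walkAvoids ha hb (.cons h .nil)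
    (by simpa [WalkAvoids] using ⟨notMem_of_mem_compOf ha, notMem_of_mem_compOf hb⟩)

lemma IsMinimalSep.exists_adj_mem_compOf (hS : IsMinimalSep G s t S) (hx : x ∈ S) :
    ∃ a ∈ CompOf G S s, G.Adj a x := by
  classical
  have hnot := hS.2 (S \ {x}) (Set.sdiff_singleton_ssubset.2 hx)
  simp only [IsSep, Set.mem_sdiff, hS.1.1, hS.1.2.1, false_and, not_false_eq_true, true_and,
    not_forall, not_exists, not_and] at hnot
  obtain ⟨p, hp⟩ := hnot
  have hxp : x ∈ p.support := by
    obtain ⟨w, hw, hwS⟩ := hS.1.2.2 p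
    obtain rfl : w = x := by simpa using hp w hw hwS
    exact hw
  obtain ⟨b, hb, hbS, a, ha, hab⟩ := (p.takeUntil x hxp).exists_adj_mem_compOf hS.1.1 hx
  obtain rfl : b = x := by simpa using hp b (p.support_takeUntil_subset_support hxp hb) hbS
  exact ⟨a, ha, hab⟩

lemma reachable_induce_of_mem_compOf {U : Set V} (hU : CompOf G S s ⊆ U) (hs : s ∈ U)
    (hv : v ∈ CompOf G S s) : (G.induce U).Reachable ⟨s, hs⟩ ⟨v, hU hv⟩ :=
  let ⟨p, hp⟩ := hv
  ⟨p.induce U fun _ hw => hU (mem_compOf_of_mem_support p hp hw)⟩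

lemma IsMinimalSep.exists_isInducedPath (hS : IsMinimalSep G s t S) (hx : x ∈ S) (hy : y ∈ S)
    (hxy : x ≠ y) (hnadj : ¬ G.Adj x y) :
    ∃ n, 2 ≤ n ∧ ∃ f : ℕ → V, f 0 = x ∧ f n = y ∧ G.IsInducedPath f n ∧
      ∀ i, 0 < i → i < n → f i ∈ CompOf G S s := by
  let U : Set V := insert x (insert y (CompOf G S s))
  have hU : CompOf G S s ⊆ U := fun _ hv => .inr (.inr hv)
  obtain ⟨a, ha, hax⟩ := hS.exists_adj_mem_compOf hx
  obtain ⟨b, hb, hby⟩ := hS.exists_adj_mem_compOf hy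
  have hsU : s ∈ U := hU (mem_compOf_self hS.1.1)
  have hreach : (G.induce U).Reachable ⟨x, .inl rfl⟩ ⟨y, .inr (.inl rfl)⟩ :=
    (Adj.reachable (show (G.induce U).Adj ⟨x, _⟩ ⟨a, hU ha⟩ from hax.symm)).trans <|
      (reachable_induce_of_mem_compOf hU hsU ha).symm.trans <|
      (reachable_induce_of_mem_compOf hU hsU hb).trans
      (Adj.reachable (show (G.induce U).Adj ⟨b, hU hb⟩ ⟨y, _⟩ from hby))
  obtain ⟨p, hp⟩ := hreach.exists_walk_length_eq_dist
  have hf := (p.isInducedPath_getVert hp).map (Embedding.induce U)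
  have hxy' : (⟨x, .inl rfl⟩ : U) ≠ ⟨y, .inr (.inl rfl)⟩ := Subtype.coe_ne_coe.1 hxy
  refine ⟨p.length, hp ▸ hreach.one_lt_dist_of_ne_of_not_adj hxy' hnadj,
    fun i => p.getVert i, by simp, by simp, hf, fun i hi hin => ?_⟩
  have hix : (p.getVert i : V) ≠ x := by simpa using (hf 0 i hi hin.le).1.symm
  have hiy : (p.getVert i : V) ≠ y := by simpa using (hf i p.length hin le_rfl).1
  rcases (p.getVert i).2 with h | h | h
  exacts [absurd h hix, absurd h hiy, h]

lemma IsMinimalSep.exists_adj_adj (hS : IsMinimalSep G s t S) (hbip : G.Colorable 2)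
    (hch : ChordalityAtMost G 5) (hind : ∀ u ∈ S, ∀ v ∈ S, ¬ G.Adj u v) (hx : x ∈ S)
    (hy : y ∈ S) : ∃ u ∈ CompOf G S s, G.Adj u x ∧ G.Adj u y := by
  obtain rfl | hxy := eq_or_ne x y
  · obtain ⟨a, ha, hax⟩ := hS.exists_adj_mem_compOf hx
    exact ⟨a, ha, hax, hax⟩
  have hnadj := hind x hx y hy
  obtain ⟨p, hp, f, hf0, hfp, hf, hfC⟩ := hS.exists_isInducedPath hx hy hxy hnadj
  obtain ⟨q, hq, g, hg0, hgq, hg, hgC⟩ := hS.symm.exists_isInducedPath hx hy hxy hnadj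
  -- the two paths form an induced cycle, which is even and shorter than 6
  obtain ⟨e⟩ := (hf.glue hg hp hq (hf0.trans hg0.symm) (hfp.trans hgq.symm)
    fun i hi hip k hk hkq => ⟨hS.1.ne_of_mem_compOf (hfC i hi hip) (hgC k hk hkq),
      hS.1.not_adj_of_mem_compOf (hfC i hi hip) (hgC k hk hkq)⟩).nonempty_embedding
  have hshort : p + q < 6 := by
    by_contra hlong
    exact (hch (p + q) (by omega)).false e
  have heven := hbip.even_of_embedding_cycleGraph e (by omega)
  obtain rfl : p = 2 := by rw [Nat.even_iff] at heven; omega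
  refine ⟨f 1, hfC 1 one_pos one_lt_two, ?_, ?_⟩
  · simpa [hf0] using ((hf 0 1 one_pos one_lt_two.le).2.2 rfl).symm
  · simpa [hfp] using (hf 1 2 one_lt_two le_rfl).2.2 rfl

end Separators

theorem stmt12_general {V : Type*} [Fintype V] (G : SimpleGraph V)
    (hbip : G.Colorable 2) (hch : ChordalityAtMost G 5)
    (s t : V)
    (S : Set V) (hS : IsMinimalSep G s t S)
    (hind : ∀ u ∈ S, ∀ v ∈ S, ¬ G.Adj u v) :
    (∃ u ∈ CompOf G S s, S ⊆ G.neighborSet u) ∧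
    (∃ v ∈ CompOf G S t, S ⊆ G.neighborSet v) := by
  classical
  have hG : G.CliqueFree 3 := hbip.cliqueFree (by norm_num)
  have side {s t : V} (hS : IsMinimalSep G s t S) :
      ∃ u ∈ CompOf G S s, S ⊆ G.neighborSet u := by
    obtain ⟨u, hu, huS⟩ := exists_forall_adj_of_forall_pair hch hG
      ⟨s, mem_compOf_self hS.1.1⟩ S.toFinset fun a ha b hb =>
        hS.exists_adj_adj hbip hch hind (Set.mem_toFinset.1 ha) (Set.mem_toFinset.1 hb)
    exact ⟨u, hu, fun a ha => huS a (Set.mem_toFinset.2 ha)⟩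
  exact ⟨side hS, side hS.symm⟩

theorem stmt12 {V : Type*} [Fintype V] (G : SimpleGraph V)
    (hbip : G.Colorable 2) (hch : ChordalityAtMost G 5)
    (s t : V) (hst : s ≠ t) (hadj : ¬ G.Adj s t)
    (S : Set V) (hS : IsMinimalSep G s t S)
    (hind : ∀ u ∈ S, ∀ v ∈ S, ¬ G.Adj u v) :
    (∃ u ∈ CompOf G S s, S ⊆ G.neighborSet u) ∧
    (∃ v ∈ CompOf G S t, S ⊆ G.neighborSet v) :=
  stmt12_general G hbip hch s t S hS hind
end
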